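/- Let X be a real Banach space, A : X → Set X an accretive operator with zer A ≠ ∅, and for each γ > 0 let J_γ : X → X be a resolvent function of A. Let α ∈ [0,1), f : X → X an α-contraction, x ∈ X, (α_n) a sequence in [0,1], (λ_n) a sequence in (0,∞), (e_n) a sequence in X, and (x_n) the VAMe iteration. Assume: σ₁ is a rate of divergence of Σ_{n=0}^∞ α_n; σ₂ is a Cauchy modulus of Σ_{n=0}^∞ |α_n − α_{n+1}|; γ₁ is a Cauchy modulus of Σ_{n=0}^∞ |1 − λ_{n+1}/λ_n|; θ₁ is a Cauchy modulus of Σ_{n=0}^∞ ‖e_n‖. Let z ∈ zer A and K_z ∈ ℕ, K_z ≥ 1, with K_z ≥ max{‖x − z‖, ‖f(z) − z‖/(1 − α)} + ⌈Σ_{i=0}^{θ₁(0)} ‖e_i‖⌉ + 1. Define χ(k) = max{σ₂(6K_z(k+1) − 1), γ₁(6K_z(k+1) − 1), θ₁(6k+5)} and Φ(k) = σ₁(⌈(χ(2k+1) + 1 + ⌈ln(4K_z(k+1))⌉)/(1 − α)⌉ + 1). Then Φ is a rate of asymptotic regularity of (x_n): for all k ∈ ℕ and all n ≥ Φ(k),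 ‖x_{n+1} − x_n‖ ≤ 1/(k+1). -/

import Mathlib

/-!
Accretivity makes each resolvent `J γ` nonexpansive, with the zeros of `A` as fixed points, and
yields the resolvent estimate `‖J l u - J m u‖ ≤ |1 - m / l| * ‖u - J l u‖`. Hence the iterates
stay within `K_z` of `z` (the errors add at most `∑ ‖e i‖`), and `s n = ‖x (n+1) - x n‖` satisfies
`s (n+1) ≤ (1 - (1 - α) a (n+1)) s n + ε n` with
`ε n = 2 K_z (|a n - a (n+1)| + |1 - λ (n+1) / λ n|) + ‖e n‖ + ‖e (n+1)‖`.
Unrolling from `N = χ (2k+1)` bounds `s n` by `2 K_z exp (-(1 - α) ∑_{N+1 < i ≤ n} a i)` plus the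
tail `∑_{i > N} ε i`: the Cauchy moduli make the tail at most `1 / (2(k+1))`, and the rate of
divergence makes the exponent at least `ln (4 K_z (k+1))` once `n ≥ Φ k`.
-/

open Finset Real

def IsCauchyModulus (b : ℕ → ℝ) (χ : ℕ → ℕ) : Prop :=
  ∀ k : ℕ, ∀ n, χ k ≤ n → ∀ p : ℕ, ∑ i ∈ Icc (n + 1) (n + p), b i ≤ 1 / (k + 1)

def IsRateOfDivergence (b : ℕ → ℝ) (σ : ℕ → ℕ) : Prop :=
  ∀ n : ℕ, (n : ℝ) ≤ ∑ i ∈ range (σ n + 1), b i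

theorem IsCauchyModulus.sum_Ico_le {b : ℕ → ℝ} {χ : ℕ → ℕ} (hχ : IsCauchyModulus b χ)
    (hb : ∀ i, 0 ≤ b i) {k n : ℕ} (hn : χ k ≤ n) (m : ℕ) :
    ∑ i ∈ Ico (n + 1) m, b i ≤ 1 / (k + 1) :=
  calc ∑ i ∈ Ico (n + 1) m, b i ≤ ∑ i ∈ Icc (n + 1) (n + (m - (n + 1))), b i :=
        sum_le_sum_of_subset_of_nonneg (fun i hi => by simp only [mem_Ico, mem_Icc] at hi ⊢; omega)
          fun i _ _ => hb i
    _ ≤ 1 / (k + 1) := hχ k n hn _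

theorem IsCauchyModulus.sum_range_le {b : ℕ → ℝ} {χ : ℕ → ℕ} (hχ : IsCauchyModulus b χ)
    (hb : ∀ i, 0 ≤ b i) (n : ℕ) :
    ∑ i ∈ range n, b i ≤ ∑ i ∈ range (χ 0 + 1), b i + 1 :=
  calc ∑ i ∈ range n, b i ≤ ∑ i ∈ range (max n (χ 0 + 1)), b i :=
        sum_le_sum_of_subset_of_nonneg (range_subset_range.2 (le_max_left _ _)) fun i _ _ => hb i
    _ = ∑ i ∈ range (χ 0 + 1), b i + ∑ i ∈ Ico (χ 0 + 1) (max n (χ 0 + 1)), b i :=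
        (sum_range_add_sum_Ico _ (le_max_right _ _)).symm
    _ ≤ ∑ i ∈ range (χ 0 + 1), b i + 1 := by
        grw [hχ.sum_Ico_le hb le_rfl]
        norm_num

theorem IsRateOfDivergence.sub_le_sum_Ico {a : ℕ → ℝ} {σ : ℕ → ℕ} (hσ : IsRateOfDivergence a σ)
    (ha : ∀ n, a n ∈ Set.Icc (0 : ℝ) 1) {N Q n : ℕ} (hNQ : N ≤ Q) (hn : σ (Q + 1) ≤ n) :
    N ≤ n ∧ (Q : ℝ) - N ≤ ∑ i ∈ Ico (N + 1) (n + 1), a i := by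
  have hsum_le : ∀ m, ∑ i ∈ range m, a i ≤ m := fun m =>
    (sum_le_sum fun i _ => (ha i).2).trans_eq (by simp)
  have hQ : (Q : ℝ) + 1 ≤ ∑ i ∈ range (n + 1), a i := by
    refine le_trans (by exact_mod_cast hσ (Q + 1)) (sum_le_sum_of_subset_of_nonneg
      (range_subset_range.2 (by omega)) fun i _ _ => (ha i).1)
  have hNn : N ≤ n := by
    have := hQ.trans (hsum_le (n + 1))
    push_cast at this
    exact hNQ.trans (by exact_mod_cast (by linarith : (Q : ℝ) ≤ n))
  refine ⟨hNn, ?_⟩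
  have := hsum_le (N + 1)
  rw [← sum_range_add_sum_Ico _ (by omega : N + 1 ≤ n + 1)] at hQ
  push_cast at this
  linarith

theorem le_exp_neg_sum_mul_add_sum {s c ε : ℕ → ℝ} (hc0 : ∀ n, 0 ≤ c n) (hc1 : ∀ n, c n ≤ 1)
    (hε : ∀ n, 0 ≤ ε n) (hrec : ∀ n, s (n + 1) ≤ (1 - c n) * s n + ε n) {N : ℕ}
    (hsN : 0 ≤ s N) {n : ℕ} (hn : N ≤ n) :
    s n ≤ exp (-∑ i ∈ Ico N n, c i) * s N + ∑ i ∈ Ico N n, ε i := by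
  induction n, hn using Nat.le_induction with
  | base => simp
  | succ n hNn ih =>
    set E := exp (-∑ i ∈ Ico N n, c i) * s N
    have hE : 0 ≤ E := by positivity
    have hT : 0 ≤ ∑ i ∈ Ico N n, ε i := sum_nonneg fun i _ => hε i
    have hexp : 1 - c n ≤ exp (-c n) := by linarith [add_one_le_exp (-c n)]
    rw [sum_Ico_succ_top hNn, sum_Ico_succ_top hNn, neg_add, exp_add, mul_right_comm]
    calc s (n + 1) ≤ (1 - c n) * (E + ∑ i ∈ Ico N n, ε i) + ε n :=
          (hrec n).trans (by gcongr; linarith [hc1 n])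
      _ ≤ exp (-c n) * E + ∑ i ∈ Ico N n, ε i + ε n := by
          nlinarith [mul_le_mul_of_nonneg_right hexp hE, mul_nonneg (hc0 n) hT]
      _ = E * exp (-c n) + (∑ i ∈ Ico N n, ε i + ε n) := by ring

theorem exp_neg_mul_le_inv_of_ceil_log_div_le {β S t : ℝ} (hβ : 0 < β) (ht : 0 < t)
    (hS : ⌈log t⌉₊ / β ≤ S) : exp (-(β * S)) ≤ t⁻¹ :=
  calc exp (-(β * S)) ≤ exp (-log t) :=
        exp_le_exp.2 (neg_le_neg ((Nat.le_ceil _).trans ((div_le_iff₀' hβ).1 hS)))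
    _ = t⁻¹ := by rw [exp_neg, exp_log ht]

theorem sum_Ico_error_le {u v w : ℕ → ℝ} {σ₂ γ₁ θ₁ : ℕ → ℕ} {K k N : ℕ} (hK : 0 < K)
    (hu : IsCauchyModulus u σ₂) (hv : IsCauchyModulus v γ₁) (hw : IsCauchyModulus w θ₁)
    (hu0 : ∀ i, 0 ≤ u i) (hv0 : ∀ i, 0 ≤ v i) (hw0 : ∀ i, 0 ≤ w i)
    (hNu : σ₂ (6 * K * (k + 1) - 1) ≤ N) (hNv : γ₁ (6 * K * (k + 1) - 1) ≤ N)
    (hNw : θ₁ (6 * k + 5) ≤ N) (n : ℕ) :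
    ∑ i ∈ Ico (N + 1) n, (2 * K * (u i + v i) + (w i + w (i + 1))) ≤ 1 / (k + 1) := by
  have hcast : ((6 * K * (k + 1) - 1 : ℕ) : ℝ) + 1 = 6 * K * (k + 1) := by
    rw [Nat.cast_pred (by positivity)]; push_cast; ring
  have hU := hu.sum_Ico_le hu0 hNu n
  have hV := hv.sum_Ico_le hv0 hNv n
  have hW := hw.sum_Ico_le hw0 hNw n
  have hW' := hw.sum_Ico_le hw0 (hNw.trans N.le_succ) (n + 1)
  rw [hcast] at hU hV
  rw [← sum_Ico_add'] at hW'
  simp only [sum_add_distrib, ← mul_sum]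
  have hK' : (0 : ℝ) < K := by exact_mod_cast hK
  calc 2 * K * (∑ i ∈ Ico (N + 1) n, u i + ∑ i ∈ Ico (N + 1) n, v i) +
        (∑ i ∈ Ico (N + 1) n, w i + ∑ i ∈ Ico (N + 1) n, w (i + 1))
      ≤ 2 * K * (1 / (6 * K * (k + 1)) + 1 / (6 * K * (k + 1))) +
        (1 / ((6 * k + 5 : ℕ) + 1) + 1 / ((6 * k + 5 : ℕ) + 1)) := by gcongr
    _ = 1 / (k + 1) := by push_cast; field_simp; ring

theorem rate_of_asymptotic_regularity {s a u v w : ℕ → ℝ} {α : ℝ} {K : ℕ}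
    {σ₁ σ₂ γ₁ θ₁ : ℕ → ℕ} (hα0 : 0 ≤ α) (hα1 : α < 1) (hK : 0 < K)
    (ha : ∀ n, a n ∈ Set.Icc (0 : ℝ) 1) (hs0 : ∀ n, 0 ≤ s n) (hsK : ∀ n, s n ≤ 2 * K)
    (hrec : ∀ n, s (n + 1) ≤
      (1 - (1 - α) * a (n + 1)) * s n + (2 * K * (u n + v n) + (w n + w (n + 1))))
    (hσ₁ : IsRateOfDivergence a σ₁) (hσ₂ : IsCauchyModulus u σ₂) (hγ₁ : IsCauchyModulus v γ₁)
    (hθ₁ : IsCauchyModulus w θ₁) (hu0 : ∀ i, 0 ≤ u i) (hv0 : ∀ i, 0 ≤ v i)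
    (hw0 : ∀ i, 0 ≤ w i) {k N n : ℕ} (hNu : σ₂ (6 * K * (2 * k + 1 + 1) - 1) ≤ N)
    (hNv : γ₁ (6 * K * (2 * k + 1 + 1) - 1) ≤ N) (hNw : θ₁ (6 * (2 * k + 1) + 5) ≤ N)
    (hn : σ₁ (⌈((N + 1 + ⌈log ((4 * K * (k + 1) : ℕ) : ℝ)⌉₊ : ℕ) : ℝ) / (1 - α)⌉₊ + 1) ≤ n) :
    s n ≤ 1 / (k + 1) := by
  set L := ⌈log ((4 * K * (k + 1) : ℕ) : ℝ)⌉₊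
  set Q := ⌈((N + 1 + L : ℕ) : ℝ) / (1 - α)⌉₊
  have h1α : 0 < 1 - α := sub_pos.2 hα1
  have hQ : ((N : ℝ) + 1) / (1 - α) + L / (1 - α) ≤ Q := by
    rw [← add_div]; exact_mod_cast Nat.le_ceil _
  have hN1 : ((N : ℝ) + 1) ≤ (N + 1) / (1 - α) := le_div_self (by positivity) h1α (by linarith)
  have hNQ : N + 1 ≤ Q := by
    have : 0 ≤ (L : ℝ) / (1 - α) := by positivity
    exact_mod_cast (by linarith : ((N : ℝ) + 1) ≤ Q)
  obtain ⟨hNn, hsum⟩ := hσ₁.sub_le_sum_Ico ha hNQ hn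
  have hchain := le_exp_neg_sum_mul_add_sum (c := fun i => (1 - α) * a (i + 1))
    (fun i => mul_nonneg h1α.le (ha _).1)
    (fun i => mul_le_one₀ (by linarith) (ha _).1 (ha _).2)
    (fun i => by positivity [hu0 i, hv0 i, hw0 i, hw0 (i + 1)]) hrec (hs0 (N + 1)) hNn
  rw [← mul_sum, sum_Ico_add'] at hchain
  have hS : (L : ℝ) / (1 - α) ≤ ∑ i ∈ Ico (N + 1 + 1) (n + 1), a i := by
    push_cast at hsum; linarith
  have hexp := exp_neg_mul_le_inv_of_ceil_log_div_le h1α (by positivity) hS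
  have htail := sum_Ico_error_le hK hσ₂ hγ₁ hθ₁ hu0 hv0 hw0 hNu hNv hNw n
  calc s n ≤ exp (-((1 - α) * ∑ i ∈ Ico (N + 1 + 1) (n + 1), a i)) * (2 * K) +
        1 / (2 * k + 1 + 1) := by
        refine hchain.trans (add_le_add (mul_le_mul_of_nonneg_left (hsK _) (exp_pos _).le) ?_)
        exact_mod_cast htail
    _ ≤ (((4 * K * (k + 1) : ℕ) : ℝ))⁻¹ * (2 * K) + 1 / (2 * k + 1 + 1) := by gcongr
    _ = 1 / (k + 1) := by push_cast; field_simp; ring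

theorem norm_apply_sub_le_of_contraction {X : Type*} [SeminormedAddCommGroup X] {f : X → X}
    {α B : ℝ} (hα0 : 0 ≤ α) (hf : ∀ x y, ‖f x - f y‖ ≤ α * ‖x - y‖) {y z : X} (hy : ‖y - z‖ ≤ B)
    (hfz : ‖f z - z‖ ≤ (1 - α) * B) : ‖f y - z‖ ≤ B :=
  calc ‖f y - z‖ ≤ ‖f y - f z‖ + ‖f z - z‖ := norm_sub_le_norm_sub_add_norm_sub _ _ _
    _ ≤ α * B + (1 - α) * B := add_le_add ((hf y z).trans (mul_le_mul_of_nonneg_left hy hα0)) hfz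
    _ = B := by ring

section Accretive

variable {X : Type*} [NormedAddCommGroup X] [NormedSpace ℝ X]

def IsAccretive (A : X → Set X) : Prop :=
  ∀ x y u v : X, u ∈ A x → v ∈ A y → ∀ γ : ℝ, 0 < γ → ‖x - y‖ ≤ ‖x - y + γ • (u - v)‖

def IsResolvent (A : X → Set X) (J : ℝ → X → X) : Prop :=
  ∀ γ : ℝ, 0 < γ → ∀ x : X, γ⁻¹ • (x - J γ x) ∈ A (J γ x)

namespace IsResolvent

variable {A : X → Set X} {J : ℝ → X → X} {γ : ℝ}

theorem norm_sub_le (hJ : IsResolvent A J) (hA : IsAccretive A) (hγ : 0 < γ) (u v : X) :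
    ‖J γ u - J γ v‖ ≤ ‖u - v‖ := by
  have key : J γ u - J γ v + γ • (γ⁻¹ • (u - J γ u) - γ⁻¹ • (v - J γ v)) = u - v := by
    rw [← smul_sub, smul_inv_smul₀ hγ.ne']
    abel
  simpa only [key] using hA _ _ _ _ (hJ γ hγ u) (hJ γ hγ v) γ hγ

theorem apply_eq_of_zero_mem (hJ : IsResolvent A J) (hA : IsAccretive A) (hγ : 0 < γ) {z : X}
    (hz : 0 ∈ A z) : J γ z = z := by
  have key : J γ z - z + γ • (γ⁻¹ • (z - J γ z) - 0) = 0 := by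
    rw [sub_zero, smul_inv_smul₀ hγ.ne']
    abel
  have h := hA _ _ _ _ (hJ γ hγ z) hz γ hγ
  rw [key, norm_zero] at h
  exact sub_eq_zero.1 (norm_le_zero_iff.1 h)

theorem norm_sub_le_of_zero_mem (hJ : IsResolvent A J) (hA : IsAccretive A) (hγ : 0 < γ)
    {z : X} (hz : 0 ∈ A z) (u : X) : ‖J γ u - z‖ ≤ ‖u - z‖ := by
  simpa only [hJ.apply_eq_of_zero_mem hA hγ hz] using hJ.norm_sub_le hA hγ u z

theorem norm_apply_sub_apply_le (hJ : IsResolvent A J) (hA : IsAccretive A) {l m : ℝ}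
    (hl : 0 < l) (hm : 0 < m) (u : X) : ‖J l u - J m u‖ ≤ |1 - m / l| * ‖u - J l u‖ := by
  have key : J l u - J m u + m • (l⁻¹ • (u - J l u) - m⁻¹ • (u - J m u)) =
      (1 - m / l) • (J l u - u) := by
    match_scalars <;> field_simp <;> ring
  have h := hA _ _ _ _ (hJ l hl u) (hJ m hm u) m hm
  rwa [key, norm_smul, Real.norm_eq_abs, norm_sub_rev (J l u) u] at h

end IsResolvent

variable {A : X → Set X} {J : ℝ → X → X} {f : X → X} {α : ℝ} {a lam : ℕ → ℝ} {e xs : ℕ → X}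

theorem norm_vame_sub_le_add_sum (hA : IsAccretive A) (hJ : IsResolvent A J) {z : X}
    (hz : 0 ∈ A z) (hα0 : 0 ≤ α) (hα1 : α ≤ 1) (hf : ∀ x y, ‖f x - f y‖ ≤ α * ‖x - y‖)
    (ha : ∀ n, a n ∈ Set.Icc (0 : ℝ) 1) (hlam : ∀ n, 0 < lam n)
    (hxs : ∀ n, xs (n + 1) = a n • f (xs n) + (1 - a n) • J (lam n) (xs n) + e n) {M : ℝ}
    (h0 : ‖xs 0 - z‖ ≤ M) (hfz : ‖f z - z‖ ≤ (1 - α) * M) (n : ℕ) :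
    ‖xs n - z‖ ≤ M + ∑ i ∈ range n, ‖e i‖ := by
  induction n with
  | zero => simpa using h0
  | succ n ih =>
    set B := M + ∑ i ∈ range n, ‖e i‖
    have hMB : M ≤ B := le_add_of_nonneg_right (sum_nonneg fun i _ => norm_nonneg _)
    have hfB : ‖f (xs n) - z‖ ≤ B := norm_apply_sub_le_of_contraction hα0 hf ih
      (hfz.trans (mul_le_mul_of_nonneg_left hMB (sub_nonneg.2 hα1)))
    have hJB : ‖J (lam n) (xs n) - z‖ ≤ B :=
      (hJ.norm_sub_le_of_zero_mem hA (hlam n) hz _).trans ih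
    have hcombo : a n • f (xs n) + (1 - a n) • J (lam n) (xs n) ∈ Metric.closedBall z B :=
      convex_closedBall z B (mem_closedBall_iff_norm.2 hfB) (mem_closedBall_iff_norm.2 hJB)
        (ha n).1 (sub_nonneg.2 (ha n).2) (add_sub_cancel _ _)
    calc ‖xs (n + 1) - z‖ = ‖(a n • f (xs n) + (1 - a n) • J (lam n) (xs n) - z) + e n‖ := by
          rw [hxs]
          abel_nf
      _ ≤ B + ‖e n‖ :=
          (norm_add_le _ _).trans (add_le_add_left (mem_closedBall_iff_norm.1 hcombo) _)
      _ = M + ∑ i ∈ range (n + 1), ‖e i‖ := by rw [sum_range_succ, add_assoc]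

theorem norm_vame_sub_le_one_sub_mul_add (hA : IsAccretive A) (hJ : IsResolvent A J)
    (hf : ∀ x y, ‖f x - f y‖ ≤ α * ‖x - y‖) (ha : ∀ n, a n ∈ Set.Icc (0 : ℝ) 1)
    (hlam : ∀ n, 0 < lam n)
    (hxs : ∀ n, xs (n + 1) = a n • f (xs n) + (1 - a n) • J (lam n) (xs n) + e n) {D : ℝ} (m : ℕ)
    (hfD : ‖f (xs m) - J (lam m) (xs m)‖ ≤ D) (hxD : ‖xs m - J (lam m) (xs m)‖ ≤ D) :
    ‖xs (m + 2) - xs (m + 1)‖ ≤ (1 - (1 - α) * a (m + 1)) * ‖xs (m + 1) - xs m‖ +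
      (D * (|a m - a (m + 1)| + |1 - lam (m + 1) / lam m|) + (‖e m‖ + ‖e (m + 1)‖)) := by
  obtain ⟨ha0, ha1⟩ := ha (m + 1)
  have hb0 : 0 ≤ 1 - a (m + 1) := sub_nonneg.2 ha1
  set y := xs m
  set y' := xs (m + 1)
  have hsplit : xs (m + 2) - y' =
      a (m + 1) • (f y' - f y) + (a (m + 1) - a m) • (f y - J (lam m) y) +
      (1 - a (m + 1)) • (J (lam (m + 1)) y' - J (lam (m + 1)) y) +
      (1 - a (m + 1)) • (J (lam (m + 1)) y - J (lam m) y) + (e (m + 1) - e m) := by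
    linear_combination (norm := module) hxs (m + 1) - hxs m
  have hcontr : ‖a (m + 1) • (f y' - f y)‖ ≤ a (m + 1) * (α * ‖y' - y‖) := by
    rw [norm_smul, Real.norm_of_nonneg ha0]
    exact mul_le_mul_of_nonneg_left (hf _ _) ha0
  have hda : ‖(a (m + 1) - a m) • (f y - J (lam m) y)‖ ≤ |a m - a (m + 1)| * D := by
    rw [norm_smul, Real.norm_eq_abs, abs_sub_comm]
    exact mul_le_mul_of_nonneg_left hfD (abs_nonneg _)
  have hnonexp : ‖(1 - a (m + 1)) • (J (lam (m + 1)) y' - J (lam (m + 1)) y)‖ ≤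
      (1 - a (m + 1)) * ‖y' - y‖ := by
    rw [norm_smul, Real.norm_of_nonneg hb0]
    exact mul_le_mul_of_nonneg_left (hJ.norm_sub_le hA (hlam _) _ _) hb0
  have hdlam : ‖(1 - a (m + 1)) • (J (lam (m + 1)) y - J (lam m) y)‖ ≤
      |1 - lam (m + 1) / lam m| * D := by
    rw [norm_smul, Real.norm_of_nonneg hb0, norm_sub_rev]
    calc (1 - a (m + 1)) * ‖J (lam m) y - J (lam (m + 1)) y‖
        ≤ ‖J (lam m) y - J (lam (m + 1)) y‖ :=
          mul_le_of_le_one_left (norm_nonneg _) (by linarith)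
      _ ≤ |1 - lam (m + 1) / lam m| * ‖y - J (lam m) y‖ :=
          hJ.norm_apply_sub_apply_le hA (hlam m) (hlam (m + 1)) y
      _ ≤ |1 - lam (m + 1) / lam m| * D := mul_le_mul_of_nonneg_left hxD (abs_nonneg _)
  have hde : ‖e (m + 1) - e m‖ ≤ ‖e m‖ + ‖e (m + 1)‖ :=
    (norm_sub_le _ _).trans_eq (add_comm _ _)
  rw [hsplit]
  refine (norm_add_le _ _).trans ((add_le_add norm_add₄_le le_rfl).trans ?_)
  linarith

end Accretive

theorem stmt_10_general {X : Type*} [NormedAddCommGroup X] [NormedSpace ℝ X]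
    (A : X → Set X)
    (hA : ∀ x y u v : X, u ∈ A x → v ∈ A y → ∀ γ : ℝ, 0 < γ →
      ‖x - y‖ ≤ ‖x - y + γ • (u - v)‖)
    (Jr : ℝ → X → X)
    (hJ : ∀ γ : ℝ, 0 < γ → ∀ x : X, γ⁻¹ • (x - Jr γ x) ∈ A (Jr γ x))
    (α : ℝ) (hα0 : 0 ≤ α) (hα1 : α < 1)
    (f : X → X) (hf : ∀ x y : X, ‖f x - f y‖ ≤ α * ‖x - y‖)
    (x : X)
    (a : ℕ → ℝ) (ha : ∀ n, a n ∈ Set.Icc (0 : ℝ) 1)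
    (lam : ℕ → ℝ) (hlam : ∀ n, 0 < lam n)
    (e : ℕ → X)
    (xs : ℕ → X) (hxs0 : xs 0 = x)
    (hxs : ∀ n : ℕ, xs (n + 1) = a n • f (xs n) + (1 - a n) • Jr (lam n) (xs n) + e n)
    -- σ₁ is a rate of divergence of Σ a n
    (σ₁ : ℕ → ℕ) (hσ₁ : ∀ n : ℕ, (n : ℝ) ≤ ∑ i ∈ Finset.range (σ₁ n + 1), a i)
    -- σ₂ is a Cauchy modulus of Σ |a n - a (n+1)|
    (σ₂ : ℕ → ℕ)
    (hσ₂ : ∀ k : ℕ, ∀ n, σ₂ k ≤ n → ∀ p : ℕ,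
      ∑ i ∈ Finset.Icc (n + 1) (n + p), |a i - a (i + 1)| ≤ 1 / (k + 1))
    -- γ₁ is a Cauchy modulus of Σ |1 - lam (n+1) / lam n|
    (γ₁ : ℕ → ℕ)
    (hγ₁ : ∀ k : ℕ, ∀ n, γ₁ k ≤ n → ∀ p : ℕ,
      ∑ i ∈ Finset.Icc (n + 1) (n + p), |1 - lam (i + 1) / lam i| ≤ 1 / (k + 1))
    -- θ₁ is a Cauchy modulus of Σ ‖e n‖
    (θ₁ : ℕ → ℕ)
    (hθ₁ : ∀ k : ℕ, ∀ n, θ₁ k ≤ n → ∀ p : ℕ,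
      ∑ i ∈ Finset.Icc (n + 1) (n + p), ‖e i‖ ≤ 1 / (k + 1))
    (z : X) (hz : (0 : X) ∈ A z)
    (Kz : ℕ) (hKz1 : 1 ≤ Kz)
    (hKz : max ‖x - z‖ (‖f z - z‖ / (1 - α)) +
      (⌈∑ i ∈ Finset.range (θ₁ 0 + 1), ‖e i‖⌉₊ : ℝ) + 1 ≤ (Kz : ℝ))
    (χ : ℕ → ℕ)
    (hχ : ∀ k : ℕ, χ k =
      max (max (σ₂ (6 * Kz * (k + 1) - 1)) (γ₁ (6 * Kz * (k + 1) - 1))) (θ₁ (6 * k + 5)))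
    (Φ : ℕ → ℕ)
    (hΦ : ∀ k : ℕ, Φ k =
      σ₁ (⌈((χ (2 * k + 1) + 1 + ⌈Real.log ((4 * Kz * (k + 1) : ℕ) : ℝ)⌉₊ : ℕ) : ℝ) /
        (1 - α)⌉₊ + 1)) :
    ∀ k : ℕ, ∀ n, Φ k ≤ n → ‖xs (n + 1) - xs n‖ ≤ 1 / (k + 1) := by
  intro k n hn
  have h1α : 0 < 1 - α := sub_pos.2 hα1
  set M := max ‖x - z‖ (‖f z - z‖ / (1 - α))
  have hfzM : ‖f z - z‖ ≤ (1 - α) * M := by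
    rw [mul_comm, ← div_le_iff₀ h1α]
    exact le_max_right _ _
  have hceil := Nat.le_ceil (∑ i ∈ range (θ₁ 0 + 1), ‖e i‖)
  have hMK : M ≤ Kz := by
    have := sum_nonneg fun i (_ : i ∈ range (θ₁ 0 + 1)) => norm_nonneg (e i)
    linarith
  have hK (n : ℕ) : ‖xs n - z‖ ≤ Kz := by
    have := norm_vame_sub_le_add_sum hA hJ hz hα0 hα1.le hf ha hlam hxs
      (hxs0 ▸ le_max_left _ _) hfzM n
    have := IsCauchyModulus.sum_range_le (b := fun i => ‖e i‖) hθ₁ (fun i => norm_nonneg _) n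
    linarith
  have hfK (n : ℕ) : ‖f (xs n) - z‖ ≤ Kz := norm_apply_sub_le_of_contraction hα0 hf (hK n)
    (hfzM.trans (mul_le_mul_of_nonneg_left hMK h1α.le))
  have hJK (n : ℕ) : ‖Jr (lam n) (xs n) - z‖ ≤ Kz :=
    (IsResolvent.norm_sub_le_of_zero_mem hJ hA (hlam n) hz _).trans (hK n)
  have hdist {u v : X} (hu : ‖u - z‖ ≤ Kz) (hv : ‖v - z‖ ≤ Kz) : ‖u - v‖ ≤ 2 * Kz :=
    (norm_sub_le_norm_sub_add_norm_sub u z v).trans (by rw [norm_sub_rev z v]; linarith)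
  rw [hΦ] at hn
  refine rate_of_asymptotic_regularity (s := fun n => ‖xs (n + 1) - xs n‖) hα0 hα1 hKz1 ha
    (fun n => norm_nonneg _) (fun n => hdist (hK _) (hK _))
    (fun m => norm_vame_sub_le_one_sub_mul_add hA hJ hf ha hlam hxs m
      (hdist (hfK m) (hJK m)) (hdist (hK m) (hJK m)))
    hσ₁ hσ₂ hγ₁ hθ₁ (fun _ => abs_nonneg _) (fun _ => abs_nonneg _) (fun _ => norm_nonneg _)
    (N := χ (2 * k + 1)) ?_ ?_ ?_ hn <;> rw [hχ] <;> omega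

/-- Rate of asymptotic regularity of the VAMe iteration. -/
theorem stmt_10 {X : Type*} [NormedAddCommGroup X] [NormedSpace ℝ X] [CompleteSpace X]
    (A : X → Set X)
    (hA : ∀ x y u v : X, u ∈ A x → v ∈ A y → ∀ γ : ℝ, 0 < γ →
      ‖x - y‖ ≤ ‖x - y + γ • (u - v)‖)
    (hzer : ∃ z : X, (0 : X) ∈ A z)
    (Jr : ℝ → X → X)
    (hJ : ∀ γ : ℝ, 0 < γ → ∀ x : X, γ⁻¹ • (x - Jr γ x) ∈ A (Jr γ x))
    (α : ℝ) (hα0 : 0 ≤ α) (hα1 : α < 1)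
    (f : X → X) (hf : ∀ x y : X, ‖f x - f y‖ ≤ α * ‖x - y‖)
    (x : X)
    (a : ℕ → ℝ) (ha : ∀ n, a n ∈ Set.Icc (0 : ℝ) 1)
    (lam : ℕ → ℝ) (hlam : ∀ n, 0 < lam n)
    (e : ℕ → X)
    (xs : ℕ → X) (hxs0 : xs 0 = x)
    (hxs : ∀ n : ℕ, xs (n + 1) = a n • f (xs n) + (1 - a n) • Jr (lam n) (xs n) + e n)
    -- σ₁ is a rate of divergence of Σ a n
    (σ₁ : ℕ → ℕ) (hσ₁ : ∀ n : ℕ, (n : ℝ) ≤ ∑ i ∈ Finset.range (σ₁ n + 1), a i)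
    -- σ₂ is a Cauchy modulus of Σ |a n - a (n+1)|
    (σ₂ : ℕ → ℕ)
    (hσ₂ : ∀ k : ℕ, ∀ n, σ₂ k ≤ n → ∀ p : ℕ,
      ∑ i ∈ Finset.Icc (n + 1) (n + p), |a i - a (i + 1)| ≤ 1 / (k + 1))
    -- γ₁ is a Cauchy modulus of Σ |1 - lam (n+1) / lam n|
    (γ₁ : ℕ → ℕ)
    (hγ₁ : ∀ k : ℕ, ∀ n, γ₁ k ≤ n → ∀ p : ℕ,
      ∑ i ∈ Finset.Icc (n + 1) (n + p), |1 - lam (i + 1) / lam i| ≤ 1 / (k + 1))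
    -- θ₁ is a Cauchy modulus of Σ ‖e n‖
    (θ₁ : ℕ → ℕ)
    (hθ₁ : ∀ k : ℕ, ∀ n, θ₁ k ≤ n → ∀ p : ℕ,
      ∑ i ∈ Finset.Icc (n + 1) (n + p), ‖e i‖ ≤ 1 / (k + 1))
    (z : X) (hz : (0 : X) ∈ A z)
    (Kz : ℕ) (hKz1 : 1 ≤ Kz)
    (hKz : max ‖x - z‖ (‖f z - z‖ / (1 - α)) +
      (⌈∑ i ∈ Finset.range (θ₁ 0 + 1), ‖e i‖⌉₊ : ℝ) + 1 ≤ (Kz : ℝ))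
    (χ : ℕ → ℕ)
    (hχ : ∀ k : ℕ, χ k =
      max (max (σ₂ (6 * Kz * (k + 1) - 1)) (γ₁ (6 * Kz * (k + 1) - 1))) (θ₁ (6 * k + 5)))
    (Φ : ℕ → ℕ)
    (hΦ : ∀ k : ℕ, Φ k =
      σ₁ (⌈((χ (2 * k + 1) + 1 + ⌈Real.log ((4 * Kz * (k + 1) : ℕ) : ℝ)⌉₊ : ℕ) : ℝ) /
        (1 - α)⌉₊ + 1)) :
    ∀ k : ℕ, ∀ n, Φ k ≤ n → ‖xs (n + 1) - xs n‖ ≤ 1 / (k + 1) :=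
  stmt_10_general A hA Jr hJ α hα0 hα1 f hf x a ha lam hlam e xs hxs0 hxs σ₁ hσ₁ σ₂ hσ₂ γ₁ hγ₁ θ₁
    hθ₁ z hz Kz hKz1 hKz χ hχ Φ hΦ
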